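/- Let K_x(y) := √2 · π · e^{−π(x²+y²)} ∫₀¹ t^{2π−1/2}(1−t²)^{−1/2} exp(2π(2xyt−(x²+y²)t²)/(1−t²)) dt. Then for all real x and y, the Fourier transform of K_x satisfies ∫_ℝ K_x(s) e^{−2πisy} ds = √2 · π · e^{−π(x²+y²)} ∫₀¹ t^{2π−1/2}(1+t²)^{−1/2} exp(2π(−2xyti + (x²+y²)t²)/(1+t²)) dt. -/

import Mathlib

open MeasureTheory Real
open scoped Real
open Set

/-!
For fixed `t ∈ (0,1)`, the factor `e^{-π(x²+s²)}` times the `t`-integrand of `K_x(s)` is the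
Gaussian `exp(-π(a s² - 2bxs + a x²))` in `s`, where `a = (1+t²)/(1-t²)` and `b = 2t/(1-t²)`
satisfy `a² - b² = 1` (Mehler's kernel). Its Fourier transform in `s` is
`a^{-1/2} exp(-π(x² + y² + 2ibxy)/a)`, which is `e^{-π(x²+y²)}` times the `t`-integrand of the
right-hand side. Fubini applies because the `s`-integral of the modulus,
`t^{2π-1/2}(1+t²)^{-1/2} e^{-πx²/a}`, is at most `1`.
-/

/-- The reproducing kernel of the Fourier-symmetric Sobolev space `ℋ`:
`K_x(y) = √2 π e^{-π(x²+y²)} ∫₀¹ t^{2π-1/2}(1-t²)^{-1/2} exp(2π(2xyt-(x²+y²)t²)/(1-t²)) dt`. -/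
noncomputable def Kker (x y : ℝ) : ℝ :=
  Real.sqrt 2 * π * Real.exp (-π * (x ^ 2 + y ^ 2))
    * ∫ t in (0 : ℝ)..1, t ^ (2 * π - 1 / 2) * (1 - t ^ 2) ^ (-(1 : ℝ) / 2)
        * Real.exp (2 * π * (2 * x * y * t - (x ^ 2 + y ^ 2) * t ^ 2) / (1 - t ^ 2))

noncomputable def mehlerGaussian (a b x s : ℝ) : ℝ :=
  rexp (-π * (a * s ^ 2 - 2 * b * x * s + a * x ^ 2))

section MehlerGaussian

variable {a : ℝ} (b x y : ℝ)

lemma mehlerGaussian_mul_cexp_eq (s : ℝ) :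
    (mehlerGaussian a b x s : ℂ) * Complex.exp (-(2 * π * Complex.I * s * y))
      = Complex.exp (((-π * a : ℝ) : ℂ) * s ^ 2 + (2 * π * b * x - 2 * π * y * Complex.I) * s
          + ((-π * a * x ^ 2 : ℝ) : ℂ)) := by
  rw [mehlerGaussian, Complex.ofReal_exp, ← Complex.exp_add]
  push_cast
  ring_nf

lemma integrable_mehlerGaussian_mul_cexp (ha : 0 < a) :
    Integrable fun s : ℝ ↦
      (mehlerGaussian a b x s : ℂ) * Complex.exp (-(2 * π * Complex.I * s * y)) := by
  simp_rw [mehlerGaussian_mul_cexp_eq]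
  exact integrable_cexp_quadratic' (by simpa using mul_pos pi_pos ha) _ _

lemma integral_mehlerGaussian_mul_cexp (ha : 0 < a) :
    ∫ s : ℝ, (mehlerGaussian a b x s : ℂ) * Complex.exp (-(2 * π * Complex.I * s * y))
      = ((a ^ (-(1 : ℝ) / 2) : ℝ) : ℂ)
        * Complex.exp
            (-π * ((a ^ 2 - b ^ 2) * x ^ 2 + y ^ 2 + 2 * b * x * y * Complex.I) / a) := by
  have ha' : (a : ℂ) ≠ 0 := Complex.ofReal_ne_zero.mpr ha.ne'
  have hroot :
      ((π : ℂ) / -((-π * a : ℝ) : ℂ)) ^ (1 / 2 : ℂ) = ((a ^ (-(1 : ℝ) / 2) : ℝ) : ℂ) := by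
    rw [show (π : ℂ) / -((-π * a : ℝ) : ℂ) = ((a⁻¹ : ℝ) : ℂ) by push_cast; field_simp,
      show (1 / 2 : ℂ) = ((1 / 2 : ℝ) : ℂ) by norm_num,
      ← Complex.ofReal_cpow (inv_nonneg.mpr ha.le), inv_rpow ha.le, ← rpow_neg ha.le]
    norm_num
  simp_rw [mehlerGaussian_mul_cexp_eq]
  rw [integral_cexp_quadratic (by simpa using mul_pos pi_pos ha), hroot]
  congr 2
  push_cast
  field_simp
  linear_combination (4 * (y : ℂ) ^ 2) * Complex.I_sq

lemma integral_mehlerGaussian (ha : 0 < a) :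
    ∫ s : ℝ, mehlerGaussian a b x s
      = a ^ (-(1 : ℝ) / 2) * rexp (-π * (a ^ 2 - b ^ 2) * x ^ 2 / a) := by
  apply Complex.ofReal_injective
  rw [← integral_complex_ofReal]
  convert integral_mehlerGaussian_mul_cexp b x 0 ha using 1 <;> push_cast
  · simp
  · ring_nf

end MehlerGaussian

noncomputable def mehlerA (t : ℝ) : ℝ := (1 + t ^ 2) / (1 - t ^ 2)

noncomputable def mehlerB (t : ℝ) : ℝ := 2 * t / (1 - t ^ 2)

noncomputable def kernelWeight (t : ℝ) : ℝ :=
  t ^ (2 * π - 1 / 2) * (1 - t ^ 2) ^ (-(1 : ℝ) / 2)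

section Kernel

variable {t : ℝ}

lemma mehlerA_pos (ht : t ^ 2 < 1) : 0 < mehlerA t :=
  div_pos (by positivity) (sub_pos.mpr ht)

lemma mehlerA_sq_sub_mehlerB_sq (ht : t ^ 2 ≠ 1) : mehlerA t ^ 2 - mehlerB t ^ 2 = 1 := by
  have : 1 - t ^ 2 ≠ 0 := sub_ne_zero.mpr ht.symm
  rw [mehlerA, mehlerB]
  field_simp
  ring

lemma exp_mul_exp_eq_mehlerGaussian (x s : ℝ) (ht : t ^ 2 ≠ 1) :
    rexp (-π * (x ^ 2 + s ^ 2))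
        * rexp (2 * π * (2 * x * s * t - (x ^ 2 + s ^ 2) * t ^ 2) / (1 - t ^ 2))
      = mehlerGaussian (mehlerA t) (mehlerB t) x s := by
  have : 1 - t ^ 2 ≠ 0 := sub_ne_zero.mpr ht.symm
  rw [mehlerGaussian, mehlerA, mehlerB, ← exp_add]
  congr 1
  field_simp
  ring

lemma kernelWeight_mul_mehlerA_rpow (ht : t ^ 2 < 1) :
    kernelWeight t * mehlerA t ^ (-(1 : ℝ) / 2)
      = t ^ (2 * π - 1 / 2) * (1 + t ^ 2) ^ (-(1 : ℝ) / 2) := by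
  have h₁ : 0 < 1 - t ^ 2 := sub_pos.mpr ht
  have : (1 - t ^ 2) ^ (-(1 : ℝ) / 2) ≠ 0 := (rpow_pos_of_pos h₁ _).ne'
  rw [kernelWeight, mehlerA, div_rpow (by positivity) h₁.le]
  field_simp

lemma Kker_eq_setIntegral (x s : ℝ) :
    Kker x s
      = √2 * π * ∫ t in Ioo 0 1, kernelWeight t * mehlerGaussian (mehlerA t) (mehlerB t) x s := by
  rw [Kker, intervalIntegral.integral_of_le zero_le_one, integral_Ioc_eq_integral_Ioo, mul_assoc,
    ← integral_const_mul]
  congr 1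
  refine setIntegral_congr_fun measurableSet_Ioo fun t ht ↦ ?_
  have ht1 : t ^ 2 ≠ 1 := by nlinarith [ht.1, ht.2]
  rw [kernelWeight, ← exp_mul_exp_eq_mehlerGaussian x s ht1]
  ring

end Kernel

noncomputable def kernelFourierIntegrand (x y s t : ℝ) : ℂ :=
  (kernelWeight t : ℂ) * ((mehlerGaussian (mehlerA t) (mehlerB t) x s : ℂ)
    * Complex.exp (-(2 * π * Complex.I * s * y)))

section KernelFourier

variable (x y : ℝ) {t : ℝ}

lemma norm_kernelFourierIntegrand (ht : t ∈ Ioo 0 1) (s : ℝ) :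
    ‖kernelFourierIntegrand x y s t‖
      = kernelWeight t * mehlerGaussian (mehlerA t) (mehlerB t) x s := by
  have hw : 0 ≤ kernelWeight t :=
    mul_nonneg (rpow_nonneg ht.1.le _) (rpow_nonneg (by nlinarith [ht.1, ht.2]) _)
  have hG : 0 ≤ mehlerGaussian (mehlerA t) (mehlerB t) x s := exp_nonneg _
  rw [kernelFourierIntegrand, norm_mul, norm_mul, Complex.norm_real, Complex.norm_real,
    norm_of_nonneg hw, norm_of_nonneg hG, Complex.norm_exp]
  simp

lemma integral_norm_kernelFourierIntegrand (ht : t ∈ Ioo 0 1) :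
    ∫ s, ‖kernelFourierIntegrand x y s t‖
      = t ^ (2 * π - 1 / 2) * (1 + t ^ 2) ^ (-(1 : ℝ) / 2) * rexp (-π * x ^ 2 / mehlerA t) := by
  have ht1 : t ^ 2 < 1 := by nlinarith [ht.1, ht.2]
  simp_rw [norm_kernelFourierIntegrand x y ht, integral_const_mul,
    integral_mehlerGaussian _ _ (mehlerA_pos ht1), mehlerA_sq_sub_mehlerB_sq ht1.ne, ← mul_assoc,
    kernelWeight_mul_mehlerA_rpow ht1, mul_one]

lemma integral_norm_kernelFourierIntegrand_le_one (ht : t ∈ Ioo 0 1) :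
    ∫ s, ‖kernelFourierIntegrand x y s t‖ ≤ 1 := by
  have ht1 : t ^ 2 < 1 := by nlinarith [ht.1, ht.2]
  have h₀ : 0 ≤ t ^ (2 * π - 1 / 2) := rpow_nonneg ht.1.le _
  have h₁ : t ^ (2 * π - 1 / 2) ≤ 1 := rpow_le_one ht.1.le ht.2.le (by linarith [pi_gt_three])
  have h₂ : (1 + t ^ 2) ^ (-(1 : ℝ) / 2) ≤ 1 :=
    rpow_le_one_of_one_le_of_nonpos (by nlinarith) (by norm_num)
  have h₃ : rexp (-π * x ^ 2 / mehlerA t) ≤ 1 :=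
    exp_le_one_iff.mpr (div_nonpos_of_nonpos_of_nonneg (by nlinarith [pi_pos, sq_nonneg x])
      (mehlerA_pos ht1).le)
  rw [integral_norm_kernelFourierIntegrand x y ht]
  exact mul_le_one₀ (mul_le_one₀ h₁ (by positivity) h₂) (by positivity) h₃

lemma integral_kernelFourierIntegrand (ht : t ∈ Ioo 0 1) :
    ∫ s, kernelFourierIntegrand x y s t
      = (rexp (-π * (x ^ 2 + y ^ 2)) : ℂ)
        * (((t ^ (2 * π - 1 / 2) : ℝ) : ℂ) * (((1 + t ^ 2) ^ (-(1 : ℝ) / 2) : ℝ) : ℂ)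
          * Complex.exp (2 * π * (-(2 * x * y * t) * Complex.I
              + ((x ^ 2 + y ^ 2) * t ^ 2 : ℝ)) / (1 + (t : ℂ) ^ 2))) := by
  have ht1 : t ^ 2 < 1 := by nlinarith [ht.1, ht.2]
  have hplus : (1 : ℂ) + t ^ 2 ≠ 0 := by
    exact_mod_cast (by positivity : (0 : ℝ) < 1 + t ^ 2).ne'
  have hminus : (1 : ℂ) - t ^ 2 ≠ 0 := by exact_mod_cast (sub_pos.mpr ht1).ne'
  have hexp : -π * (((mehlerA t : ℂ) ^ 2 - (mehlerB t : ℂ) ^ 2) * x ^ 2 + y ^ 2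
        + 2 * mehlerB t * x * y * Complex.I) / mehlerA t
      = ((-π * (x ^ 2 + y ^ 2) : ℝ) : ℂ) + 2 * π * (-(2 * x * y * t) * Complex.I
          + ((x ^ 2 + y ^ 2) * t ^ 2 : ℝ)) / (1 + (t : ℂ) ^ 2) := by
    rw [mehlerA, mehlerB]
    push_cast
    field_simp
    ring
  simp only [kernelFourierIntegrand]
  rw [integral_const_mul, integral_mehlerGaussian_mul_cexp _ _ _ (mehlerA_pos ht1), ← mul_assoc,
    ← Complex.ofReal_mul, kernelWeight_mul_mehlerA_rpow ht1, hexp, Complex.exp_add,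
    Complex.ofReal_exp, Complex.ofReal_mul]
  ring

lemma integrable_kernelFourierIntegrand :
    Integrable (Function.uncurry (kernelFourierIntegrand x y))
      (volume.prod (volume.restrict (Ioo 0 1))) := by
  have hmeas : AEStronglyMeasurable (Function.uncurry (kernelFourierIntegrand x y))
      (volume.prod (volume.restrict (Ioo 0 1))) := by
    apply Measurable.aestronglyMeasurable
    unfold Function.uncurry kernelFourierIntegrand kernelWeight mehlerGaussian mehlerA mehlerB
    fun_prop
  refine (integrable_prod_iff' hmeas).mpr ⟨?_, ?_⟩
  · filter_upwards [ae_restrict_mem measurableSet_Ioo] with t ht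
    have ht1 : t ^ 2 < 1 := by nlinarith [ht.1, ht.2]
    show Integrable fun s ↦ kernelFourierIntegrand x y s t
    unfold kernelFourierIntegrand
    exact (integrable_mehlerGaussian_mul_cexp _ _ _ (mehlerA_pos ht1)).const_mul _
  · refine (integrable_const (1 : ℝ)).mono' hmeas.norm.prod_swap.integral_prod_right' ?_
    filter_upwards [ae_restrict_mem measurableSet_Ioo] with t ht
    rw [norm_of_nonneg (integral_nonneg fun _ ↦ norm_nonneg _)]
    exact integral_norm_kernelFourierIntegrand_le_one x y ht

end KernelFourier

/-- The Fourier transform of the reproducing kernel `K_x` of `ℋ`: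
`K̂_x(y) = √2 π e^{-π(x²+y²)} ∫₀¹ t^{2π-1/2}(1+t²)^{-1/2} exp(2π(-2xyti+(x²+y²)t²)/(1+t²)) dt`. -/
theorem fourier_of_kernel (x y : ℝ) :
    ∫ s : ℝ, (Kker x s : ℂ) * Complex.exp (-(2 * π * Complex.I * s * y))
      = (Real.sqrt 2 * π * Real.exp (-π * (x ^ 2 + y ^ 2)) : ℝ)
        * ∫ t in (0 : ℝ)..1,
            ((t ^ (2 * π - 1 / 2) : ℝ) : ℂ) * (((1 + t ^ 2) ^ (-(1 : ℝ) / 2) : ℝ) : ℂ)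
              * Complex.exp (2 * π * (-(2 * x * y * t) * Complex.I
                  + ((x ^ 2 + y ^ 2) * t ^ 2 : ℝ)) / (1 + (t : ℂ) ^ 2)) := by
  have hslice (s : ℝ) : (Kker x s : ℂ) * Complex.exp (-(2 * π * Complex.I * s * y))
      = ((√2 * π : ℝ) : ℂ) * ∫ t in Ioo 0 1, kernelFourierIntegrand x y s t := by
    simp only [Kker_eq_setIntegral, kernelFourierIntegrand, Complex.ofReal_mul,
      ← integral_complex_ofReal]
    rw [mul_assoc, ← integral_mul_const]
    simp only [mul_assoc]
  simp_rw [hslice, integral_const_mul]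
  rw [integral_integral_swap (integrable_kernelFourierIntegrand x y),
    setIntegral_congr_fun measurableSet_Ioo fun t ht ↦ integral_kernelFourierIntegrand x y ht,
    intervalIntegral.integral_of_le zero_le_one, integral_Ioc_eq_integral_Ioo, integral_const_mul]
  push_cast
  ring
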